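/- Consider the multilayer NODE system in which, for each layer i+1, the scalar activation φ^{i+1} is incrementally sector bounded by [α^{i+1}, β^{i+1}] on ℝ. Suppose there exist a symmetric positive definite P ∈ ℝ^{n×n} and constants 0 < p̲ ≤ p̄ and γ > 0 with p̲·I ⪯ P ⪯ p̄·I such that for all vectors v⁰ ∈ ℝⁿ and vⁱ ∈ ℝ^{mᵢ}, i = 1,…,k: ⟨v⁰, (AᵀP + PA + γP)·v⁰⟩ + 2·⟨v⁰, P·W^{k+1}·vᵏ⟩ − 2·Σ_{i=0}^{k−1} ⟨v^{i+1} − α^{i+1}·W^{i+1}·vⁱ, v^{i+1} − β^{i+1}·W^{i+1}·vⁱ⟩ ≤ 0. Then any two solutions x₁, x₂ of the multilayer NODE system satisfy ‖x₁(t) − x₂(t)‖ ≤ √(p̄/p̲) · e^{−(γ/2)·t} · ‖x₁(0) − x₂(0)‖ for all t ≥ 0. -/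

import Mathlib

open Matrix

/-- The Euclidean norm of a vector in `ℝⁿ`. -/
noncomputable def eNorm {n : ℕ} (v : Fin n → ℝ) : ℝ := Real.sqrt (v ⬝ᵥ v)

/-- Layer maps of a feedforward neural network whose layer `i+1` applies the scalar
activation `φ i` componentwise: `w⁰(x) = x`,
`w^{i+1}(x)_j = φ i ((W i · w^i(x))_j + (b i)_j)`. -/
noncomputable def nnLayer (m : ℕ → ℕ)
    (W : (i : ℕ) → Matrix (Fin (m (i + 1))) (Fin (m i)) ℝ)
    (b : (i : ℕ) → Fin (m (i + 1)) → ℝ)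
    (φ : ℕ → ℝ → ℝ) :
    (i : ℕ) → (Fin (m 0) → ℝ) → Fin (m i) → ℝ
  | 0, x => x
  | i + 1, x => fun j => φ i ((W i).mulVec (nnLayer m W b φ i x) j + b i j)

/-!
The Lyapunov function `V(t) = (x₁ - x₂)ᵀ P (x₁ - x₂)` decays exponentially. Along the difference
`v⁰ = x₁ - x₂` of two trajectories, with `vⁱ` the differences of the layer outputs, the sector
bound makes every term `⟨v^{i+1} - αW vⁱ, v^{i+1} - βW vⁱ⟩` nonpositive, so the quadratic-form
hypothesis gives `V' ≤ -γ V`. Grönwall yields `V(t) ≤ e^{-γt} V(0)`, and `p̲ I ⪯ P ⪯ p̄ I`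
converts this into the bound on Euclidean norms.
-/

theorem HasDerivAt.dotProduct {ι : Type*} [Fintype ι] {f g : ℝ → ι → ℝ} {f' g' : ι → ℝ} {t : ℝ}
    (hf : HasDerivAt f f' t) (hg : HasDerivAt g g' t) :
    HasDerivAt (fun s => f s ⬝ᵥ g s) (f' ⬝ᵥ g t + f t ⬝ᵥ g') t :=
  (HasDerivAt.fun_sum (u := Finset.univ) fun j _ =>
    (hasDerivAt_pi.mp hf j).mul (hasDerivAt_pi.mp hg j)).congr_deriv
    Finset.sum_add_distrib

theorem HasDerivAt.mulVec {ι κ : Type*} [Fintype ι] [Fintype κ] (P : Matrix κ ι ℝ)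
    {f : ℝ → ι → ℝ} {f' : ι → ℝ} {t : ℝ} (hf : HasDerivAt f f' t) :
    HasDerivAt (fun s => P *ᵥ f s) (P *ᵥ f') t :=
  P.mulVecLin.toContinuousLinearMap.hasFDerivAt.comp_hasDerivAt t hf

theorem Matrix.IsSymm.dotProduct_mulVec_comm {ι R : Type*} [Fintype ι] [CommSemiring R]
    {P : Matrix ι ι R} (hP : P.IsSymm) (u w : ι → R) : u ⬝ᵥ P *ᵥ w = w ⬝ᵥ P *ᵥ u := by
  conv_lhs => rw [← hP.eq]
  rw [mulVec_transpose, dotProduct_comm, ← dotProduct_mulVec]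

theorem HasDerivAt.dotProduct_mulVec_self {ι : Type*} [Fintype ι] {P : Matrix ι ι ℝ}
    (hP : P.IsSymm) {f : ℝ → ι → ℝ} {f' : ι → ℝ} {t : ℝ} (hf : HasDerivAt f f' t) :
    HasDerivAt (fun s => f s ⬝ᵥ P *ᵥ f s) (2 * (f t ⬝ᵥ P *ᵥ f')) t := by
  convert hf.dotProduct (hf.mulVec P) using 1
  rw [hP.dotProduct_mulVec_comm f']
  ring

theorem Matrix.IsSymm.dotProduct_transpose_mul_add_mul_mulVec {ι R : Type*} [Fintype ι]
    [CommSemiring R] {P : Matrix ι ι R} (hP : P.IsSymm) (A : Matrix ι ι R) (u : ι → R) :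
    u ⬝ᵥ (Aᵀ * P + P * A) *ᵥ u = 2 * (u ⬝ᵥ P *ᵥ (A *ᵥ u)) := by
  rw [add_mulVec, dotProduct_add, ← mulVec_mulVec, ← mulVec_mulVec, dotProduct_mulVec u Aᵀ,
    vecMul_transpose, hP.dotProduct_mulVec_comm (A *ᵥ u)]
  ring

theorem Matrix.PosSemidef.mul_dotProduct_self_le {ι : Type*} [Fintype ι] [DecidableEq ι]
    {P : Matrix ι ι ℝ} {c : ℝ} (h : (P - c • (1 : Matrix ι ι ℝ)).PosSemidef) (u : ι → ℝ) :
    c * (u ⬝ᵥ u) ≤ u ⬝ᵥ P *ᵥ u := by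
  have := h.dotProduct_mulVec_nonneg u
  simp only [star_trivial, sub_mulVec, dotProduct_sub, smul_mulVec, one_mulVec,
    dotProduct_smul, smul_eq_mul] at this
  linarith

theorem Matrix.PosSemidef.dotProduct_mulVec_le_mul {ι : Type*} [Fintype ι] [DecidableEq ι]
    {P : Matrix ι ι ℝ} {c : ℝ} (h : (c • (1 : Matrix ι ι ℝ) - P).PosSemidef) (u : ι → ℝ) :
    u ⬝ᵥ P *ᵥ u ≤ c * (u ⬝ᵥ u) := by
  have := h.dotProduct_mulVec_nonneg u
  simp only [star_trivial, sub_mulVec, dotProduct_sub, smul_mulVec, one_mulVec,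
    dotProduct_smul, smul_eq_mul] at this
  linarith

theorem le_mul_exp_of_hasDerivAt_le {V V' : ℝ → ℝ} {K : ℝ}
    (hV : ∀ s, 0 ≤ s → HasDerivAt V (V' s) s) (hV' : ∀ s, 0 ≤ s → V' s ≤ K * V s)
    {t : ℝ} (ht : 0 ≤ t) : V t ≤ V 0 * Real.exp (K * t) := by
  have := le_gronwallBound_of_liminf_deriv_right_le (δ := V 0) (ε := 0) (b := t)
    (fun s hs => (hV s hs.1).continuousAt.continuousWithinAt)
    (fun s hs _ hr => (hV s hs.1).hasDerivWithinAt.liminf_right_slope_le hr) le_rfl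
    (fun s hs => by simpa using hV' s hs.1) t ⟨ht, le_rfl⟩
  rwa [gronwallBound_ε0, sub_zero] at this

theorem dotProduct_sector_nonpos {ι : Type*} [Fintype ι] {φ : ℝ → ℝ} {α β : ℝ}
    (hφ : ∀ a c : ℝ, (φ a - φ c - α * (a - c)) * (φ a - φ c - β * (a - c)) ≤ 0)
    (z₁ z₂ : ι → ℝ) :
    ((fun j => φ (z₁ j)) - (fun j => φ (z₂ j)) - α • (z₁ - z₂)) ⬝ᵥ
      ((fun j => φ (z₁ j)) - (fun j => φ (z₂ j)) - β • (z₁ - z₂)) ≤ 0 :=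
  Finset.sum_nonpos fun j _ => hφ (z₁ j) (z₂ j)

section NNLayer

variable {m : ℕ → ℕ} {W : (i : ℕ) → Matrix (Fin (m (i + 1))) (Fin (m i)) ℝ}
  {b : (i : ℕ) → Fin (m (i + 1)) → ℝ} {φ : ℕ → ℝ → ℝ} {α β : ℕ → ℝ}

theorem nnLayer_sector_nonpos
    (hsec : ∀ i, ∀ a c : ℝ,
      (φ i a - φ i c - α i * (a - c)) * (φ i a - φ i c - β i * (a - c)) ≤ 0)
    (x y : Fin (m 0) → ℝ) (i : ℕ) :
    (nnLayer m W b φ (i + 1) x - nnLayer m W b φ (i + 1) y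
        - α i • W i *ᵥ (nnLayer m W b φ i x - nnLayer m W b φ i y)) ⬝ᵥ
      (nnLayer m W b φ (i + 1) x - nnLayer m W b φ (i + 1) y
        - β i • W i *ᵥ (nnLayer m W b φ i x - nnLayer m W b φ i y)) ≤ 0 := by
  have hpre : W i *ᵥ (nnLayer m W b φ i x - nnLayer m W b φ i y)
      = (W i *ᵥ nnLayer m W b φ i x + b i) - (W i *ᵥ nnLayer m W b φ i y + b i) := by
    rw [mulVec_sub]
    abel
  rw [hpre]
  exact dotProduct_sector_nonpos (hsec i) _ _

theorem node_lyapunov_deriv_le {k : ℕ} {A P : Matrix (Fin (m 0)) (Fin (m 0)) ℝ}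
    {Wk : Matrix (Fin (m 0)) (Fin (m k)) ℝ} {γ : ℝ}
    (hsec : ∀ i, ∀ a c : ℝ,
      (φ i a - φ i c - α i * (a - c)) * (φ i a - φ i c - β i * (a - c)) ≤ 0)
    (hP : P.IsSymm)
    (hQF : ∀ v : (i : ℕ) → Fin (m i) → ℝ,
      v 0 ⬝ᵥ (Aᵀ * P + P * A + γ • P) *ᵥ v 0 + 2 * (v 0 ⬝ᵥ P *ᵥ Wk *ᵥ v k)
        - 2 * ∑ i ∈ Finset.range k,
            (v (i + 1) - α i • W i *ᵥ v i) ⬝ᵥ (v (i + 1) - β i • W i *ᵥ v i) ≤ 0)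
    (x y : Fin (m 0) → ℝ) :
    2 * ((x - y) ⬝ᵥ P *ᵥ (A *ᵥ (x - y) + Wk *ᵥ (nnLayer m W b φ k x - nnLayer m W b φ k y)))
      ≤ -γ * ((x - y) ⬝ᵥ P *ᵥ (x - y)) := by
  have hsector := Finset.sum_nonpos fun i (_ : i ∈ Finset.range k) =>
    nnLayer_sector_nonpos (W := W) (b := b) hsec x y i
  have hQ := hQF fun i => nnLayer m W b φ i x - nnLayer m W b φ i y
  have hv₀ : nnLayer m W b φ 0 x - nnLayer m W b φ 0 y = x - y := rfl
  rw [hv₀, add_mulVec, dotProduct_add, hP.dotProduct_transpose_mul_add_mul_mulVec, smul_mulVec,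
    dotProduct_smul, smul_eq_mul] at hQ
  rw [mulVec_add, dotProduct_add]
  linarith

end NNLayer

theorem eNorm_le_of_dotProduct_mulVec_le {n : ℕ} {P : Matrix (Fin n) (Fin n) ℝ} {p₁ p₂ c : ℝ}
    (hp₁ : 0 < p₁) (hPlo : (P - p₁ • (1 : Matrix (Fin n) (Fin n) ℝ)).PosSemidef)
    (hPhi : (p₂ • (1 : Matrix (Fin n) (Fin n) ℝ) - P).PosSemidef) (hc : 0 ≤ c)
    {u w : Fin n → ℝ} (h : u ⬝ᵥ P *ᵥ u ≤ c ^ 2 * (w ⬝ᵥ P *ᵥ w)) :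
    eNorm u ≤ Real.sqrt (p₂ / p₁) * c * eNorm w := by
  have hw : 0 ≤ w ⬝ᵥ w := by simpa using dotProduct_star_self_nonneg w
  have hu : u ⬝ᵥ u ≤ p₂ / p₁ * (c ^ 2 * (w ⬝ᵥ w)) := by
    rw [div_mul_eq_mul_div, le_div_iff₀ hp₁]
    have hhi := mul_le_mul_of_nonneg_left (hPhi.dotProduct_mulVec_le_mul w) (sq_nonneg c)
    linarith [hPlo.mul_dotProduct_self_le u]
  calc eNorm u ≤ Real.sqrt (p₂ / p₁ * (c ^ 2 * (w ⬝ᵥ w))) := Real.sqrt_le_sqrt hu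
    _ = Real.sqrt (p₂ / p₁) * c * eNorm w := by
      rw [Real.sqrt_mul' _ (by positivity), Real.sqrt_mul' _ hw, Real.sqrt_sq hc, eNorm,
        mul_assoc]

theorem multilayer_node_contractive_general
    (k : ℕ) (m : ℕ → ℕ)
    (A : Matrix (Fin (m 0)) (Fin (m 0)) ℝ)
    (W : (i : ℕ) → Matrix (Fin (m (i + 1))) (Fin (m i)) ℝ)
    (b : (i : ℕ) → Fin (m (i + 1)) → ℝ)
    (Wk : Matrix (Fin (m 0)) (Fin (m k)) ℝ) (bk : Fin (m 0) → ℝ)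
    (φ : ℕ → ℝ → ℝ) (α β : ℕ → ℝ)
    (hsec : ∀ i, ∀ a c : ℝ,
      (φ i a - φ i c - α i * (a - c)) * (φ i a - φ i c - β i * (a - c)) ≤ 0)
    (P : Matrix (Fin (m 0)) (Fin (m 0)) ℝ) (hP : P.PosDef)
    (p₁ p₂ γ : ℝ) (hp₁ : 0 < p₁)
    (hPlo : (P - p₁ • (1 : Matrix (Fin (m 0)) (Fin (m 0)) ℝ)).PosSemidef)
    (hPhi : (p₂ • (1 : Matrix (Fin (m 0)) (Fin (m 0)) ℝ) - P).PosSemidef)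
    (hQF : ∀ v : (i : ℕ) → Fin (m i) → ℝ,
      v 0 ⬝ᵥ (Aᵀ * P + P * A + γ • P).mulVec (v 0)
        + 2 * (v 0 ⬝ᵥ P.mulVec (Wk.mulVec (v k)))
        - 2 * ∑ i ∈ Finset.range k,
            (v (i + 1) - α i • (W i).mulVec (v i)) ⬝ᵥ
              (v (i + 1) - β i • (W i).mulVec (v i)) ≤ 0)
    (x₁ x₂ : ℝ → Fin (m 0) → ℝ)
    (hx₁ : ∀ t, 0 ≤ t → HasDerivAt x₁
      (A.mulVec (x₁ t) + (Wk.mulVec (nnLayer m W b φ k (x₁ t)) + bk)) t)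
    (hx₂ : ∀ t, 0 ≤ t → HasDerivAt x₂
      (A.mulVec (x₂ t) + (Wk.mulVec (nnLayer m W b φ k (x₂ t)) + bk)) t) :
    ∀ t, 0 ≤ t →
      eNorm (x₁ t - x₂ t) ≤
        Real.sqrt (p₂ / p₁) * Real.exp (-(γ / 2) * t) * eNorm (x₁ 0 - x₂ 0) := by
  intro t ht
  have hPs : P.IsSymm := by simpa using hP.isHermitian
  have hΔ : ∀ s, 0 ≤ s → HasDerivAt (fun s => x₁ s - x₂ s) (A *ᵥ (x₁ s - x₂ s)
      + Wk *ᵥ (nnLayer m W b φ k (x₁ s) - nnLayer m W b φ k (x₂ s))) s := by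
    intro s hs
    refine ((hx₁ s hs).sub (hx₂ s hs)).congr_deriv ?_
    simp only [mulVec_sub]
    abel
  have hV := le_mul_exp_of_hasDerivAt_le (fun s hs => (hΔ s hs).dotProduct_mulVec_self hPs)
    (fun s _ => node_lyapunov_deriv_le hsec hPs hQF (x₁ s) (x₂ s)) ht
  have hexp : Real.exp (-γ * t) = Real.exp (-(γ / 2) * t) ^ 2 := by
    rw [← Real.exp_nat_mul]
    ring_nf
  exact eNorm_le_of_dotProduct_mulVec_le hp₁ hPlo hPhi (Real.exp_pos _).le
    (by rw [← hexp, mul_comm]; exact hV)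

/-- Theorem 3: contraction of the multilayer NODE system
`ẋ = A x + W^{k+1} wᵏ(x) + b^{k+1}` under the quadratic-form condition. -/
theorem multilayer_node_contractive
    (k : ℕ) (hk : 1 ≤ k) (m : ℕ → ℕ)
    (A : Matrix (Fin (m 0)) (Fin (m 0)) ℝ)
    (W : (i : ℕ) → Matrix (Fin (m (i + 1))) (Fin (m i)) ℝ)
    (b : (i : ℕ) → Fin (m (i + 1)) → ℝ)
    (Wk : Matrix (Fin (m 0)) (Fin (m k)) ℝ) (bk : Fin (m 0) → ℝ)
    (φ : ℕ → ℝ → ℝ) (α β : ℕ → ℝ)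
    (hsec : ∀ i, ∀ a c : ℝ,
      (φ i a - φ i c - α i * (a - c)) * (φ i a - φ i c - β i * (a - c)) ≤ 0)
    (P : Matrix (Fin (m 0)) (Fin (m 0)) ℝ) (hP : P.PosDef)
    (p₁ p₂ γ : ℝ) (hp₁ : 0 < p₁) (hp₁₂ : p₁ ≤ p₂) (hγ : 0 < γ)
    (hPlo : (P - p₁ • (1 : Matrix (Fin (m 0)) (Fin (m 0)) ℝ)).PosSemidef)
    (hPhi : (p₂ • (1 : Matrix (Fin (m 0)) (Fin (m 0)) ℝ) - P).PosSemidef)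
    (hQF : ∀ v : (i : ℕ) → Fin (m i) → ℝ,
      v 0 ⬝ᵥ (Aᵀ * P + P * A + γ • P).mulVec (v 0)
        + 2 * (v 0 ⬝ᵥ P.mulVec (Wk.mulVec (v k)))
        - 2 * ∑ i ∈ Finset.range k,
            (v (i + 1) - α i • (W i).mulVec (v i)) ⬝ᵥ
              (v (i + 1) - β i • (W i).mulVec (v i)) ≤ 0)
    (x₁ x₂ : ℝ → Fin (m 0) → ℝ)
    (hx₁ : ∀ t, 0 ≤ t → HasDerivAt x₁
      (A.mulVec (x₁ t) + (Wk.mulVec (nnLayer m W b φ k (x₁ t)) + bk)) t)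
    (hx₂ : ∀ t, 0 ≤ t → HasDerivAt x₂
      (A.mulVec (x₂ t) + (Wk.mulVec (nnLayer m W b φ k (x₂ t)) + bk)) t) :
    ∀ t, 0 ≤ t →
      eNorm (x₁ t - x₂ t) ≤
        Real.sqrt (p₂ / p₁) * Real.exp (-(γ / 2) * t) * eNorm (x₁ 0 - x₂ 0) :=
  multilayer_node_contractive_general k m A W b Wk bk φ α β hsec P hP p₁ p₂ γ hp₁ hPlo hPhi hQF x₁
    x₂ hx₁ hx₂
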